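/- For any combinatory pre-model A and any n ∈ ℕ, the polynomial algebra A[x_1,...,x_n] is a retract of the polynomial algebra A[x] in one indeterminate. -/

import Mathlib

/-- A combinatory pre-model: an applicative structure with constants
`k`, `s`, `i`, `e` satisfying the usual equations. -/
structure CPM : Type 1 where
  carrier : Type
  app : carrier → carrier → carrier
  k : carrier
  s : carrier
  i : carrier
  e : carrier
  k_ax : ∀ a b, app (app k a) b = a
  s_ax : ∀ a b c, app (app (app s a) b) c = app (app a c) (app b c)
  i_ax : ∀ a, app i a = a
  e_ax : ∀ a b, app (app e a) b = app a b

/-- Homomorphisms of combinatory pre-models. -/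
structure CPMHom (A B : CPM) where
  toFun : A.carrier → B.carrier
  map_app : ∀ a b, toFun (A.app a b) = B.app (toFun a) (toFun b)
  map_k : toFun A.k = B.k
  map_s : toFun A.s = B.s
  map_i : toFun A.i = B.i
  map_e : toFun A.e = B.e

/-- Terms: the free applicative structure over a set `S`. -/
inductive Tm (S : Type) : Type
  | of : S → Tm S
  | app : Tm S → Tm S → Tm S

/-- The congruence generated by the combinator equations and the embedding
relation, defining the polynomial algebra over `A` in indeterminates `V`. -/
inductive PolyEq (A : CPM) (V : Type) : Tm (V ⊕ A.carrier) → Tm (V ⊕ A.carrier) → Prop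
  | kEq (t u) : PolyEq A V (.app (.app (.of (.inr A.k)) t) u) t
  | sEq (t u v) : PolyEq A V (.app (.app (.app (.of (.inr A.s)) t) u) v)
      (.app (.app t v) (.app u v))
  | iEq (t) : PolyEq A V (.app (.of (.inr A.i)) t) t
  | eEq (t u) : PolyEq A V (.app (.app (.of (.inr A.e)) t) u) (.app t u)
  | inj (a b : A.carrier) :
      PolyEq A V (.app (.of (.inr a)) (.of (.inr b))) (.of (.inr (A.app a b)))
  | refl (t) : PolyEq A V t t
  | symm {t u} : PolyEq A V t u → PolyEq A V u t
  | trans {t u v} : PolyEq A V t u → PolyEq A V u v → PolyEq A V t v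
  | congr {t t' u u'} : PolyEq A V t t' → PolyEq A V u u' →
      PolyEq A V (.app t u) (.app t' u')

/-- Application on the quotient. -/
def polyApp (A : CPM) (V : Type) :
    Quot (PolyEq A V) → Quot (PolyEq A V) → Quot (PolyEq A V) :=
  Quot.lift
    (fun t => Quot.lift (fun u => Quot.mk _ (Tm.app t u))
      (fun _ _ h => Quot.sound (PolyEq.congr (PolyEq.refl t) h)))
    (fun t t' h => by
      funext q
      induction q using Quot.ind with
      | _ u => exact Quot.sound (PolyEq.congr h (PolyEq.refl u)))

/-- The polynomial algebra `A[V]`. -/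
def polyAlg (A : CPM) (V : Type) : CPM where
  carrier := Quot (PolyEq A V)
  app := polyApp A V
  k := Quot.mk _ (.of (.inr A.k))
  s := Quot.mk _ (.of (.inr A.s))
  i := Quot.mk _ (.of (.inr A.i))
  e := Quot.mk _ (.of (.inr A.e))
  k_ax := by
    intro a b
    induction a using Quot.ind with | _ t =>
    induction b using Quot.ind with | _ u =>
    exact Quot.sound (PolyEq.kEq t u)
  s_ax := by
    intro a b c
    induction a using Quot.ind with | _ t =>
    induction b using Quot.ind with | _ u =>
    induction c using Quot.ind with | _ v =>
    exact Quot.sound (PolyEq.sEq t u v)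
  i_ax := by
    intro a
    induction a using Quot.ind with | _ t =>
    exact Quot.sound (PolyEq.iEq t)
  e_ax := by
    intro a b
    induction a using Quot.ind with | _ t =>
    induction b using Quot.ind with | _ u =>
    exact Quot.sound (PolyEq.eEq t u)

/-- The canonical embedding `η : A → A[V]`. -/
def eta (A : CPM) (V : Type) : CPMHom A (polyAlg A V) where
  toFun a := Quot.mk _ (.of (.inr a))
  map_app a b := (Quot.sound (PolyEq.inj a b)).symm
  map_k := rfl
  map_s := rfl
  map_i := rfl
  map_e := rfl

/-- The indeterminate `v` as an element of `A[V]`. -/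
def xvar (A : CPM) (V : Type) (v : V) : (polyAlg A V).carrier :=
  Quot.mk _ (.of (.inl v))

/-! A tuple `(x₁, …, xₙ)` of elements of any pre-model can be encoded by nested pairing and
decoded again by projections built from application alone, and homomorphisms commute with both.
So the map `xᵢ ↦ πᵢ x` extends to a homomorphism `s : A[x₁,…,xₙ] → A[x]`, the map
`x ↦ (x₁, …, xₙ)` to a homomorphism `r : A[x] → A[x₁,…,xₙ]`, and `r ∘ s` fixes `A` and sends
each `xᵢ` to `πᵢ (x₁, …, xₙ) = xᵢ`; by the universal property of `A[x₁,…,xₙ]` it is the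
identity. -/

namespace CPMHom

def id (A : CPM) : CPMHom A A where
  toFun a := a
  map_app _ _ := rfl
  map_k := rfl
  map_s := rfl
  map_i := rfl
  map_e := rfl

def comp {A B C : CPM} (ψ : CPMHom B C) (φ : CPMHom A B) : CPMHom A C where
  toFun a := ψ.toFun (φ.toFun a)
  map_app a b := by rw [φ.map_app, ψ.map_app]
  map_k := by rw [φ.map_k, ψ.map_k]
  map_s := by rw [φ.map_s, ψ.map_s]
  map_i := by rw [φ.map_i, ψ.map_i]
  map_e := by rw [φ.map_e, ψ.map_e]

end CPMHom

namespace polyAlg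

variable {A : CPM} {V : Type} {B : CPM}

def evalTm (φ : CPMHom A B) (f : V → B.carrier) : Tm (V ⊕ A.carrier) → B.carrier
  | .of (.inl v) => f v
  | .of (.inr a) => φ.toFun a
  | .app t u => B.app (evalTm φ f t) (evalTm φ f u)

theorem evalTm_eq_of_polyEq (φ : CPMHom A B) (f : V → B.carrier) {t u : Tm (V ⊕ A.carrier)}
    (h : PolyEq A V t u) : evalTm φ f t = evalTm φ f u := by
  induction h with
  | kEq => simp only [evalTm, φ.map_k, B.k_ax]
  | sEq => simp only [evalTm, φ.map_s, B.s_ax]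
  | iEq => simp only [evalTm, φ.map_i, B.i_ax]
  | eEq => simp only [evalTm, φ.map_e, B.e_ax]
  | inj => simp only [evalTm, φ.map_app]
  | refl => rfl
  | symm _ ih => exact ih.symm
  | trans _ _ ih₁ ih₂ => exact ih₁.trans ih₂
  | congr _ _ ih₁ ih₂ => simp only [evalTm, ih₁, ih₂]

def lift (φ : CPMHom A B) (f : V → B.carrier) : CPMHom (polyAlg A V) B where
  toFun := Quot.lift (evalTm φ f) fun _ _ => evalTm_eq_of_polyEq φ f
  map_app a b := by
    induction a using Quot.ind
    induction b using Quot.ind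
    rfl
  map_k := φ.map_k
  map_s := φ.map_s
  map_i := φ.map_i
  map_e := φ.map_e

@[simp]
theorem lift_xvar (φ : CPMHom A B) (f : V → B.carrier) (v : V) :
    (lift φ f).toFun (xvar A V v) = f v :=
  rfl

theorem hom_ext {φ ψ : CPMHom (polyAlg A V) B}
    (h_eta : ∀ a, φ.toFun ((eta A V).toFun a) = ψ.toFun ((eta A V).toFun a))
    (h_xvar : ∀ v, φ.toFun (xvar A V v) = ψ.toFun (xvar A V v)) (p : (polyAlg A V).carrier) :
    φ.toFun p = ψ.toFun p := by
  induction p using Quot.ind with | _ t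
  induction t with
  | of v =>
    rcases v with v | a
    · exact h_xvar v
    · exact h_eta a
  | app t u iht ihu =>
    calc φ.toFun (Quot.mk _ (.app t u))
        = B.app (φ.toFun (Quot.mk _ t)) (φ.toFun (Quot.mk _ u)) :=
          φ.map_app (Quot.mk _ t) (Quot.mk _ u)
      _ = B.app (ψ.toFun (Quot.mk _ t)) (ψ.toFun (Quot.mk _ u)) := by rw [iht, ihu]
      _ = ψ.toFun (Quot.mk _ (.app t u)) := (ψ.map_app (Quot.mk _ t) (Quot.mk _ u)).symm

end polyAlg

namespace CPM

variable (B : CPM)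

-- `pair a b z = z a b`, `fst` applies `t = k` and `snd` applies `f = k i` (the paper's `λ*xy.y`).
def pair (a b : B.carrier) : B.carrier :=
  B.app (B.app B.s (B.app (B.app B.s B.i) (B.app B.k a))) (B.app B.k b)

def fst (p : B.carrier) : B.carrier := B.app p B.k

def snd (p : B.carrier) : B.carrier := B.app p (B.app B.k B.i)

theorem fst_pair (a b : B.carrier) : B.fst (B.pair a b) = a := by
  simp only [fst, pair, B.s_ax, B.i_ax, B.k_ax]

theorem snd_pair (a b : B.carrier) : B.snd (B.pair a b) = b := by
  simp only [snd, pair, B.s_ax, B.i_ax, B.k_ax]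

def tuple : ∀ n, (Fin n → B.carrier) → B.carrier
  | 0, _ => B.i
  | n + 1, f => B.pair (f 0) (tuple n (Fin.tail f))

def proj (i : ℕ) (p : B.carrier) : B.carrier := B.fst (B.snd^[i] p)

theorem proj_tuple : ∀ n (i : Fin n) (f : Fin n → B.carrier), B.proj i (B.tuple n f) = f i
  | 0, i, _ => i.elim0
  | n + 1, i, f => by
    induction i using Fin.cases with
    | zero => exact B.fst_pair _ _
    | succ j =>
      rw [proj, Fin.val_succ, Function.iterate_succ_apply, tuple, snd_pair]
      exact proj_tuple n j (Fin.tail f)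

end CPM

namespace CPMHom

variable {B C : CPM} (φ : CPMHom B C)

theorem map_fst (p : B.carrier) : φ.toFun (B.fst p) = C.fst (φ.toFun p) := by
  rw [CPM.fst, CPM.fst, φ.map_app, φ.map_k]

theorem map_snd (p : B.carrier) : φ.toFun (B.snd p) = C.snd (φ.toFun p) := by
  rw [CPM.snd, CPM.snd, φ.map_app, φ.map_app, φ.map_k, φ.map_i]

theorem map_proj (i : ℕ) (p : B.carrier) : φ.toFun (B.proj i p) = C.proj i (φ.toFun p) := by
  rw [CPM.proj, CPM.proj, map_fst, Function.Semiconj.iterate_right φ.map_snd i p]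

end CPMHom

/-- `A[x₁,…,xₙ]` is a retract of `A[x]`. -/
theorem polyAlg_fin_retract_of_polyAlg_one (A : CPM) (n : ℕ) :
    ∃ (s : CPMHom (polyAlg A (Fin n)) (polyAlg A Unit))
      (r : CPMHom (polyAlg A Unit) (polyAlg A (Fin n))),
      ∀ t, r.toFun (s.toFun t) = t := by
  let s := polyAlg.lift (eta A Unit) fun i : Fin n => (polyAlg A Unit).proj i (xvar A Unit ())
  let r := polyAlg.lift (eta A (Fin n)) fun _ : Unit =>
    (polyAlg A (Fin n)).tuple n (xvar A (Fin n))
  refine ⟨s, r, polyAlg.hom_ext (φ := r.comp s) (ψ := CPMHom.id _) (fun a => rfl) fun i => ?_⟩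
  change r.toFun ((polyAlg A Unit).proj i (xvar A Unit ())) = xvar A (Fin n) i
  rw [r.map_proj, polyAlg.lift_xvar, CPM.proj_tuple]
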